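/- Let T be a braided self-adjoint contraction on H ⊗ H. For any X ∈ ker P_n ⊆ H^{⊗n} and any Y ∈ H^{⊗m}, the tensor X ⊗ Y lies in ker P_{n+m}. -/

import Mathlib

/-!
The key step is the factorisation `P_{n+1} = R̃_{n+1} (P_n ⊗ 1)`. It follows by induction on `n`
from `R_{n+1} = (R_n ⊗ 1) + T_1 ⋯ T_n` and the intertwining relation
`(T_1 ⋯ T_n)(P_n ⊗ 1) = (1 ⊗ P_n)(T_1 ⋯ T_n)`. That relation holds with any element of the
algebra generated by `T_1, …, T_{n-1}` in place of `P_n`, since on generators it reads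
`(T_1 ⋯ T_n) T_i = T_{i+1} (T_1 ⋯ T_n)`: `T_i` commutes past `T_{i+2}, …, T_n`, the braid relation
turns `T_i T_{i+1} T_i` into `T_{i+1} T_i T_{i+1}`, and `T_{i+1}` commutes past `T_1, …, T_{i-1}`.
Given the factorisation, `P_{n+m+1} (X ⊗ Y) = R̃_{n+m+1} (P_{n+m} ⊗ 1)(X ⊗ Y)`, and every slice of
`X ⊗ Y` along the last tensor factor is of the form `X ⊗ Y'`, so induction on `m` finishes the proof.
-/

open scoped ComplexOrder

namespace Wick

/-- The operator `T_i = 1^{⊗(i-1)} ⊗ T ⊗ 1^{⊗(n-i-1)}` on `H^{⊗n}` (1-indexed, acting on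
tensor factors `i` and `i+1`), where `H = ℂ^d` and `H^{⊗n}` is identified with
functions `(Fin n → Fin d) → ℂ` via the basis of elementary tensors. -/
noncomputable def Ti (d n : ℕ) (T : Matrix (Fin d × Fin d) (Fin d × Fin d) ℂ) (i : ℕ) :
    Matrix (Fin n → Fin d) (Fin n → Fin d) ℂ :=
  if h : 1 ≤ i ∧ i < n then
    fun w w' =>
      T (w ⟨i - 1, by omega⟩, w ⟨i, h.2⟩) (w' ⟨i - 1, by omega⟩, w' ⟨i, h.2⟩) *
        ∏ j : Fin n, if (j : ℕ) = i - 1 ∨ (j : ℕ) = i then 1 else (if w j = w' j then 1 else 0)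
  else 1

/-- The product `T_1 T_2 ⋯ T_k` on `H^{⊗n}`. -/
noncomputable def prodT (d n : ℕ) (T : Matrix (Fin d × Fin d) (Fin d × Fin d) ℂ) (k : ℕ) :
    Matrix (Fin n → Fin d) (Fin n → Fin d) ℂ :=
  ((List.range k).map (fun j => Ti d n T (j + 1))).prod

/-- The reversed product `T_k T_{k-1} ⋯ T_1` on `H^{⊗n}`. -/
noncomputable def prodTrev (d n : ℕ) (T : Matrix (Fin d × Fin d) (Fin d × Fin d) ℂ) (k : ℕ) :
    Matrix (Fin n → Fin d) (Fin n → Fin d) ℂ :=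
  ((List.range k).map (fun j => Ti d n T (k - j))).prod

/-- `R_n = 1 + T_1 + T_1 T_2 + ⋯ + T_1 T_2 ⋯ T_{n-1}` on `H^{⊗n}`. -/
noncomputable def Rmat (d n : ℕ) (T : Matrix (Fin d × Fin d) (Fin d × Fin d) ℂ) :
    Matrix (Fin n → Fin d) (Fin n → Fin d) ℂ :=
  ∑ k ∈ Finset.range n, prodT d n T k

/-- `1 ⊗ A` on `H^{⊗(n+1)}`, for `A` an operator on `H^{⊗n}`. -/
noncomputable def oneTensor (d n : ℕ) (A : Matrix (Fin n → Fin d) (Fin n → Fin d) ℂ) :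
    Matrix (Fin (n + 1) → Fin d) (Fin (n + 1) → Fin d) ℂ :=
  fun w w' => (if w 0 = w' 0 then 1 else 0) * A (fun j => w j.succ) (fun j => w' j.succ)

/-- `A ⊗ 1` on `H^{⊗(n+1)}`, for `A` an operator on `H^{⊗n}`. -/
noncomputable def tensorOne (d n : ℕ) (A : Matrix (Fin n → Fin d) (Fin n → Fin d) ℂ) :
    Matrix (Fin (n + 1) → Fin d) (Fin (n + 1) → Fin d) ℂ :=
  fun w w' =>
    A (fun j => w j.castSucc) (fun j => w' j.castSucc) *
      (if w (Fin.last n) = w' (Fin.last n) then 1 else 0)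

/-- The operators `P_n` on `H^{⊗n}`: `P_1 = 1`, `P_{n+1} = (1 ⊗ P_n) R_{n+1}`
(so `P_2 = R_2 = 1 + T`). -/
noncomputable def Pmat (d : ℕ) (T : Matrix (Fin d × Fin d) (Fin d × Fin d) ℂ) :
    (n : ℕ) → Matrix (Fin n → Fin d) (Fin n → Fin d) ℂ
  | 0 => 1
  | n + 1 => oneTensor d n (Pmat d T n) * Rmat d (n + 1) T

/-- `U_n = (T_1 ⋯ T_n)(T_1 ⋯ T_{n-1}) ⋯ (T_1 T_2) T_1` on `H^{⊗m}`. -/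
noncomputable def Umat (d m : ℕ) (T : Matrix (Fin d × Fin d) (Fin d × Fin d) ℂ) (n : ℕ) :
    Matrix (Fin m → Fin d) (Fin m → Fin d) ℂ :=
  ((List.range n).map (fun j => prodT d m T (n - j))).prod

/-- The braid condition `T_1 T_2 T_1 = T_2 T_1 T_2` on `H^{⊗3}`. -/
def Braided (d : ℕ) (T : Matrix (Fin d × Fin d) (Fin d × Fin d) ℂ) : Prop :=
  Ti d 3 T 1 * Ti d 3 T 2 * Ti d 3 T 1 = Ti d 3 T 2 * Ti d 3 T 1 * Ti d 3 T 2

/-- Elementary tensor `X ⊗ Y ∈ H^{⊗(n+m)}`. -/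
noncomputable def tensorVec {d n m : ℕ} (X : (Fin n → Fin d) → ℂ) (Y : (Fin m → Fin d) → ℂ) :
    (Fin (n + m) → Fin d) → ℂ :=
  fun u => X (fun i => u (Fin.castAdd m i)) * Y (fun j => u (Fin.natAdd n j))

open scoped Kronecker

noncomputable def oneKroneckerHom {R o ι κ : Type*} [CommSemiring R] [Fintype o] [DecidableEq o]
    [Fintype ι] [DecidableEq ι] [Fintype κ] [DecidableEq κ] (e : o × ι ≃ κ) :
    Matrix ι ι R →ₐ[R] Matrix κ κ R where
  toFun A := Matrix.reindexAlgEquiv R R e ((1 : Matrix o o R) ⊗ₖ A)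
  map_one' := by rw [Matrix.one_kronecker_one, map_one]
  map_mul' A B := by rw [← map_mul, ← Matrix.mul_kronecker_mul, one_mul]
  map_zero' := by rw [Matrix.kronecker_zero, map_zero]
  map_add' A B := by rw [Matrix.kronecker_add, map_add]
  commutes' r := by
    rw [Algebra.algebraMap_eq_smul_one, Matrix.kronecker_smul, Matrix.one_kronecker_one, map_smul,
      map_one, Algebra.algebraMap_eq_smul_one]

section Tensor

variable {d n : ℕ}

noncomputable def oneTensorHom (d n : ℕ) :
    Matrix (Fin n → Fin d) (Fin n → Fin d) ℂ →ₐ[ℂ]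
      Matrix (Fin (n + 1) → Fin d) (Fin (n + 1) → Fin d) ℂ :=
  oneKroneckerHom (Fin.consEquiv fun _ => Fin d)

noncomputable def tensorOneHom (d n : ℕ) :
    Matrix (Fin n → Fin d) (Fin n → Fin d) ℂ →ₐ[ℂ]
      Matrix (Fin (n + 1) → Fin d) (Fin (n + 1) → Fin d) ℂ :=
  oneKroneckerHom (Fin.snocEquiv fun _ => Fin d)

lemma coe_oneTensorHom : ⇑(oneTensorHom d n) = oneTensor d n := by
  ext A w w'
  rfl

lemma coe_tensorOneHom : ⇑(tensorOneHom d n) = tensorOne d n := by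
  ext A w w'
  exact mul_comm _ _

lemma oneTensor_mul (A B : Matrix (Fin n → Fin d) (Fin n → Fin d) ℂ) :
    oneTensor d n (A * B) = oneTensor d n A * oneTensor d n B := by
  rw [← coe_oneTensorHom, map_mul]

lemma tensorOne_mul (A B : Matrix (Fin n → Fin d) (Fin n → Fin d) ℂ) :
    tensorOne d n (A * B) = tensorOne d n A * tensorOne d n B := by
  rw [← coe_tensorOneHom, map_mul]

lemma oneTensor_tensorOne (A : Matrix (Fin n → Fin d) (Fin n → Fin d) ℂ) :
    oneTensor d (n + 1) (tensorOne d n A) = tensorOne d (n + 1) (oneTensor d n A) := by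
  ext w w'
  simp only [oneTensor, tensorOne, Fin.succ_castSucc, Fin.succ_last, Fin.castSucc_zero]
  ac_rfl

lemma tensorOne_mulVec_apply (A : Matrix (Fin n → Fin d) (Fin n → Fin d) ℂ)
    (Z : (Fin (n + 1) → Fin d) → ℂ) (u : Fin (n + 1) → Fin d) :
    (tensorOne d n A).mulVec Z u =
      A.mulVec (fun v => Z (Fin.snoc v (u (Fin.last n)))) (Fin.init u) := by
  simp only [Matrix.mulVec, dotProduct, tensorOne]
  rw [← (Fin.snocEquiv fun _ => Fin d).sum_comp, Fintype.sum_prod_type]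
  simp only [Fin.snocEquiv_apply, Fin.snoc_castSucc, Fin.snoc_last, mul_ite, mul_one, mul_zero,
    ite_mul, zero_mul, Finset.sum_ite_irrel, Finset.sum_const_zero, Finset.sum_ite_eq,
    Finset.mem_univ, ↓reduceIte]
  rfl

end Tensor

noncomputable def kron {d n m : ℕ} (A : Matrix (Fin n → Fin d) (Fin n → Fin d) ℂ)
    (B : Matrix (Fin m → Fin d) (Fin m → Fin d) ℂ) :
    Matrix (Fin (n + m) → Fin d) (Fin (n + m) → Fin d) ℂ :=
  Matrix.reindex (Fin.appendEquiv n m) (Fin.appendEquiv n m) (A ⊗ₖ B)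

section Kron

variable {d n m : ℕ}

lemma kron_apply (A : Matrix (Fin n → Fin d) (Fin n → Fin d) ℂ)
    (B : Matrix (Fin m → Fin d) (Fin m → Fin d) ℂ) (w w' : Fin (n + m) → Fin d) :
    kron A B w w' = A (fun i => w (Fin.castAdd m i)) (fun i => w' (Fin.castAdd m i)) *
      B (fun j => w (Fin.natAdd n j)) (fun j => w' (Fin.natAdd n j)) := by
  simp [kron]

lemma kron_mul (A A' : Matrix (Fin n → Fin d) (Fin n → Fin d) ℂ)
    (B B' : Matrix (Fin m → Fin d) (Fin m → Fin d) ℂ) :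
    kron A B * kron A' B' = kron (A * A') (B * B') := by
  simp [kron, Matrix.mul_kronecker_mul]

end Kron

section Ti

variable {d : ℕ} {T : Matrix (Fin d × Fin d) (Fin d × Fin d) ℂ}

lemma Ti_apply {n i : ℕ} (h1 : 1 ≤ i) (h2 : i < n) (w w' : Fin n → Fin d) :
    Ti d n T i w w' =
      T (w ⟨i - 1, by omega⟩, w ⟨i, h2⟩) (w' ⟨i - 1, by omega⟩, w' ⟨i, h2⟩) *
        if ∀ j : Fin n, (j : ℕ) ≠ i - 1 → (j : ℕ) ≠ i → w j = w' j then 1 else 0 := by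
  simp only [Ti, h1, h2, and_self, ↓reduceDIte, ← ite_or, Finset.prod_boole]
  simp [or_iff_not_imp_left]

lemma oneTensor_Ti {n i : ℕ} (h1 : 1 ≤ i) (h2 : i < n) :
    oneTensor d n (Ti d n T i) = Ti d (n + 1) T (i + 1) := by
  obtain ⟨k, rfl⟩ : ∃ k, i = k + 1 := ⟨i - 1, by omega⟩
  ext w w'
  rw [oneTensor, Ti_apply h1 h2, Ti_apply (by omega) (by omega)]
  simp only [Fin.forall_fin_succ]
  simp [← ite_and, and_comm]

lemma tensorOne_Ti {n i : ℕ} (h1 : 1 ≤ i) (h2 : i < n) :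
    tensorOne d n (Ti d n T i) = Ti d (n + 1) T i := by
  obtain ⟨k, rfl⟩ : ∃ k, i = k + 1 := ⟨i - 1, by omega⟩
  ext w w'
  rw [tensorOne, Ti_apply h1 h2, Ti_apply h1 (by omega)]
  have hlast : n ≠ k ∧ n ≠ k + 1 := by omega
  simp only [Fin.forall_fin_succ']
  simp [← ite_and, hlast, and_comm]

lemma Ti_eq_kron_one {n m i : ℕ} (h1 : 1 ≤ i) (h2 : i < n) :
    Ti d (n + m) T i = kron (Ti d n T i) 1 := by
  obtain ⟨k, rfl⟩ : ∃ k, i = k + 1 := ⟨i - 1, by omega⟩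
  ext w w'
  rw [kron_apply, Ti_apply h1 h2, Ti_apply h1 (by omega), Matrix.one_apply]
  simp only [Fin.forall_fin_add]
  have hfar (j : Fin m) : n + (j : ℕ) ≠ k ∧ n + (j : ℕ) ≠ k + 1 := by omega
  simp [funext_iff, hfar, ← ite_and, and_comm]

lemma Ti_eq_one_kron {n m i : ℕ} (h1 : 1 ≤ i) (h2 : i < m) :
    Ti d (n + m) T (n + i) = kron 1 (Ti d m T i) := by
  obtain ⟨k, rfl⟩ : ∃ k, i = k + 1 := ⟨i - 1, by omega⟩
  ext w w'
  rw [kron_apply, Ti_apply h1 h2, Ti_apply (by omega) (by omega), Matrix.one_apply]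
  simp only [Fin.forall_fin_add]
  have hfar (j : Fin n) : (j : ℕ) ≠ n + k ∧ (j : ℕ) ≠ n + (k + 1) := by omega
  simp [funext_iff, hfar, ← ite_and, and_comm]

lemma Ti_commute {N i j : ℕ} (h1 : 1 ≤ i) (h2 : i + 2 ≤ j) (h3 : j < N) :
    Commute (Ti d N T i) (Ti d N T j) := by
  obtain ⟨j, rfl⟩ : ∃ j', j = i + 1 + j' := ⟨j - (i + 1), by omega⟩
  obtain ⟨m, rfl⟩ : ∃ m, N = i + 1 + m := ⟨N - (i + 1), by omega⟩
  rw [Commute, SemiconjBy, Ti_eq_kron_one h1 (by omega), Ti_eq_one_kron (by omega) (by omega),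
    kron_mul, kron_mul, one_mul, mul_one, one_mul, mul_one]

lemma Braided.Ti_braid (hb : Braided d T) {N i : ℕ} (h1 : 1 ≤ i) (h2 : i + 1 < N) :
    Ti d N T i * Ti d N T (i + 1) * Ti d N T i =
      Ti d N T (i + 1) * Ti d N T i * Ti d N T (i + 1) := by
  obtain ⟨a, rfl⟩ : ∃ a, i = a + 1 := ⟨i - 1, by omega⟩
  obtain ⟨t, rfl⟩ : ∃ t, N = a + (3 + t) := ⟨N - (a + 3), by omega⟩
  have e1 : Ti d (a + (3 + t)) T (a + 1) = kron 1 (kron (Ti d 3 T 1) 1) := by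
    rw [Ti_eq_one_kron le_rfl (by omega), Ti_eq_kron_one le_rfl (by omega)]
  have e2 : Ti d (a + (3 + t)) T (a + 1 + 1) = kron 1 (kron (Ti d 3 T 2) 1) := by
    rw [Ti_eq_one_kron (i := 2) (by omega) (by omega), Ti_eq_kron_one (by omega) (by omega)]
  simp only [e1, e2, kron_mul, mul_one]
  rw [show Ti d 3 T 1 * Ti d 3 T 2 * Ti d 3 T 1 = _ from hb]

end Ti

section Cycle

variable {d : ℕ} {T : Matrix (Fin d × Fin d) (Fin d × Fin d) ℂ}

lemma prodT_succ {N k : ℕ} : prodT d N T (k + 1) = prodT d N T k * Ti d N T (k + 1) := by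
  simp [prodT, List.range_succ]

lemma prodT_commute_Ti {N i k : ℕ} (hik : k + 2 ≤ i) (hiN : i < N) :
    Commute (prodT d N T k) (Ti d N T i) := by
  refine Commute.list_prod_left _ _ fun x hx => ?_
  obtain ⟨j, hj, rfl⟩ := List.mem_map.mp hx
  exact Ti_commute (by omega) (by rw [List.mem_range] at hj; omega) hiN

lemma Braided.prodT_mul_Ti (hb : Braided d T) {N i k : ℕ} (h1 : 1 ≤ i) (hik : i < k)
    (hkN : k < N) : prodT d N T k * Ti d N T i = Ti d N T (i + 1) * prodT d N T k := by
  induction k, hik using Nat.le_induction with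
  | base =>
    obtain ⟨a, rfl⟩ : ∃ a, i = a + 1 := ⟨i - 1, by omega⟩
    have hc := prodT_commute_Ti (T := T) (k := a) (i := a + 1 + 1) (by omega) hkN
    calc prodT d N T (a + 2) * Ti d N T (a + 1)
        = prodT d N T a * (Ti d N T (a + 1) * Ti d N T (a + 2) * Ti d N T (a + 1)) := by
          simp only [prodT_succ, mul_assoc]
      _ = prodT d N T a * (Ti d N T (a + 2) * Ti d N T (a + 1) * Ti d N T (a + 2)) := by
          rw [hb.Ti_braid h1 hkN]
      _ = Ti d N T (a + 2) * prodT d N T (a + 2) := by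
          simp only [prodT_succ, ← mul_assoc, hc.eq]
  | succ k hik ih =>
    have hc := Ti_commute (T := T) h1 (show i + 2 ≤ k + 1 by omega) hkN
    rw [prodT_succ, mul_assoc, ← hc.eq, ← mul_assoc, ih (by omega), mul_assoc]

end Cycle

noncomputable def braidAlgebra (d m : ℕ) (T : Matrix (Fin d × Fin d) (Fin d × Fin d) ℂ) :
    Subalgebra ℂ (Matrix (Fin m → Fin d) (Fin m → Fin d) ℂ) :=
  Algebra.adjoin ℂ (Ti d m T '' Set.Ico 1 m)

section BraidAlgebra

variable {d m : ℕ} {T : Matrix (Fin d × Fin d) (Fin d × Fin d) ℂ}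

lemma Ti_mem_braidAlgebra {i : ℕ} (h1 : 1 ≤ i) (h2 : i < m) : Ti d m T i ∈ braidAlgebra d m T :=
  Algebra.subset_adjoin ⟨i, ⟨h1, h2⟩, rfl⟩

lemma prodT_mem_braidAlgebra {k : ℕ} (hk : k < m) : prodT d m T k ∈ braidAlgebra d m T := by
  refine Subalgebra.list_prod_mem _ fun x hx => ?_
  obtain ⟨j, hj, rfl⟩ := List.mem_map.mp hx
  exact Ti_mem_braidAlgebra (by omega) (by rw [List.mem_range] at hj; omega)

lemma Rmat_mem_braidAlgebra : Rmat d m T ∈ braidAlgebra d m T :=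
  Subalgebra.sum_mem _ fun _ hk => prodT_mem_braidAlgebra (Finset.mem_range.mp hk)

lemma oneTensor_mem_braidAlgebra {A : Matrix (Fin m → Fin d) (Fin m → Fin d) ℂ}
    (hA : A ∈ braidAlgebra d m T) : oneTensor d m A ∈ braidAlgebra d (m + 1) T := by
  rw [← coe_oneTensorHom, ← Subalgebra.mem_comap]
  refine Algebra.adjoin_le ?_ hA
  rintro _ ⟨i, ⟨h1, h2⟩, rfl⟩
  rw [SetLike.mem_coe, Subalgebra.mem_comap, coe_oneTensorHom, oneTensor_Ti h1 h2]
  exact Ti_mem_braidAlgebra (by omega) (by omega)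

lemma Pmat_mem_braidAlgebra : ∀ m, Pmat d T m ∈ braidAlgebra d m T
  | 0 => Subalgebra.one_mem _
  | m + 1 => Subalgebra.mul_mem _ (oneTensor_mem_braidAlgebra (Pmat_mem_braidAlgebra m))
      Rmat_mem_braidAlgebra

lemma Braided.prodT_mul_tensorOne (hb : Braided d T) {A : Matrix (Fin m → Fin d) (Fin m → Fin d) ℂ}
    (hA : A ∈ braidAlgebra d m T) :
    prodT d (m + 1) T m * tensorOne d m A = oneTensor d m A * prodT d (m + 1) T m := by
  rw [← coe_oneTensorHom, ← coe_tensorOneHom]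
  induction hA using Algebra.adjoin_induction with
  | mem A hA =>
    obtain ⟨i, ⟨h1, h2⟩, rfl⟩ := hA
    rw [coe_oneTensorHom, coe_tensorOneHom, tensorOne_Ti h1 h2, oneTensor_Ti h1 h2]
    exact hb.prodT_mul_Ti h1 h2 (by omega)
  | algebraMap r => simp only [AlgHom.commutes, Algebra.commutes]
  | add A B _ _ hA hB => rw [map_add, map_add, mul_add, add_mul, hA, hB]
  | mul A B _ _ hA hB => rw [map_mul, map_mul, ← mul_assoc, hA, mul_assoc, hB, mul_assoc]

end BraidAlgebra

/-- The paper's `R̃_N = 1 + T_{N-1} + T_{N-2} T_{N-1} + ⋯ + T_1 ⋯ T_{N-1}` on `H^{⊗N}`, built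
through `R̃_{N+1} = 1 ⊗ R̃_N + T_1 ⋯ T_N` from the empty sum `R̃_0 = 0`. -/
noncomputable def Rtilde (d : ℕ) (T : Matrix (Fin d × Fin d) (Fin d × Fin d) ℂ) :
    (N : ℕ) → Matrix (Fin N → Fin d) (Fin N → Fin d) ℂ
  | 0 => 0
  | N + 1 => oneTensor d N (Rtilde d T N) + prodT d (N + 1) T N

section Factorization

variable {d n : ℕ} {T : Matrix (Fin d × Fin d) (Fin d × Fin d) ℂ}

lemma tensorOne_prodT {k : ℕ} (hk : k < n) :
    tensorOne d n (prodT d n T k) = prodT d (n + 1) T k := by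
  rw [prodT, prodT, ← coe_tensorOneHom, map_list_prod, List.map_map]
  refine congrArg List.prod (List.map_congr_left fun j hj => ?_)
  rw [Function.comp_apply, coe_tensorOneHom,
    tensorOne_Ti (by omega) (by rw [List.mem_range] at hj; omega)]

lemma Rmat_succ : Rmat d (n + 1) T = tensorOne d n (Rmat d n T) + prodT d (n + 1) T n := by
  rw [Rmat, Finset.sum_range_succ, Rmat, ← coe_tensorOneHom, map_sum, coe_tensorOneHom]
  congr 1
  exact Finset.sum_congr rfl fun k hk => (tensorOne_prodT (Finset.mem_range.mp hk)).symm

theorem Braided.Pmat_succ_eq_Rtilde_mul (hb : Braided d T) :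
    ∀ n, Pmat d T (n + 1) = Rtilde d T (n + 1) * tensorOne d n (Pmat d T n)
  | 0 => by
    simp [Pmat, Rtilde, Rmat, prodT, ← coe_oneTensorHom, ← coe_tensorOneHom]
  | n + 1 => by
    have hleft : oneTensor d (n + 1) (Pmat d T (n + 1)) * tensorOne d (n + 1) (Rmat d (n + 1) T) =
        oneTensor d (n + 1) (Rtilde d T (n + 1)) * tensorOne d (n + 1) (Pmat d T (n + 1)) := by
      conv_lhs => rw [hb.Pmat_succ_eq_Rtilde_mul n]
      rw [Pmat.eq_2 d T n, oneTensor_mul, tensorOne_mul, oneTensor_tensorOne, mul_assoc]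
    have hright := hb.prodT_mul_tensorOne (Pmat_mem_braidAlgebra (T := T) (n + 1))
    rw [Pmat.eq_2, Rmat_succ, mul_add, hleft, ← hright, ← add_mul]
    rfl

end Factorization

section TensorVec

variable {d n m : ℕ}

lemma tensorVec_fin_zero (X : (Fin n → Fin d) → ℂ) (Y : (Fin 0 → Fin d) → ℂ) :
    tensorVec X Y = Y Fin.elim0 • X := by
  ext u
  rw [tensorVec, Pi.smul_apply, smul_eq_mul, mul_comm, Subsingleton.elim (fun j => u _) Fin.elim0]
  rfl

lemma tensorVec_snoc (X : (Fin n → Fin d) → ℂ) (Y : (Fin (m + 1) → Fin d) → ℂ)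
    (v : Fin (n + m) → Fin d) (a : Fin d) :
    tensorVec X Y (Fin.snoc v a : Fin (n + m + 1) → Fin d) =
      tensorVec X (fun w => Y (Fin.snoc w a)) v := by
  simp only [tensorVec]
  congr 2
  · funext i
    exact Fin.snoc_castSucc (α := fun _ => Fin d) (i := Fin.castAdd m i) ..
  · funext j
    refine Fin.lastCases ?_ (fun j => ?_) j
    · simp
    · rw [Fin.snoc_castSucc]
      exact Fin.snoc_castSucc (α := fun _ => Fin d) (i := Fin.natAdd n j) ..

end TensorVec

theorem tensor_mem_ker_P_general (d n m : ℕ) (T : Matrix (Fin d × Fin d) (Fin d × Fin d) ℂ)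
    (hbraid : Braided d T)
    (X : (Fin n → Fin d) → ℂ) (hX : (Pmat d T n).mulVec X = 0)
    (Y : (Fin m → Fin d) → ℂ) :
    (Pmat d T (n + m)).mulVec (tensorVec X Y) = 0 := by
  induction m with
  | zero =>
    show (Pmat d T n).mulVec _ = 0
    rw [tensorVec_fin_zero, Matrix.mulVec_smul, hX, smul_zero]
  | succ m ih =>
    have hslice : (tensorOne d (n + m) (Pmat d T (n + m))).mulVec
        (tensorVec (m := m + 1) X Y) = 0 := by
      ext u
      rw [tensorOne_mulVec_apply]
      simp only [tensorVec_snoc, ih, Pi.zero_apply]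
    show (Pmat d T (n + m + 1)).mulVec _ = 0
    rw [hbraid.Pmat_succ_eq_Rtilde_mul, ← Matrix.mulVec_mulVec, hslice, Matrix.mulVec_zero]

/-- Let `T` be a braided self-adjoint contraction on `H ⊗ H`.  For any `X ∈ ker P_n` in
`H^{⊗n}` and any `Y ∈ H^{⊗m}`, the tensor `X ⊗ Y` lies in `ker P_{n+m}`. -/
theorem tensor_mem_ker_P (d n m : ℕ) (T : Matrix (Fin d × Fin d) (Fin d × Fin d) ℂ)
    (hsa : T.IsHermitian) (hcontr : ‖Matrix.toEuclideanCLM (𝕜 := ℂ) T‖ ≤ 1)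
    (hbraid : Braided d T)
    (X : (Fin n → Fin d) → ℂ) (hX : (Pmat d T n).mulVec X = 0)
    (Y : (Fin m → Fin d) → ℂ) :
    (Pmat d T (n + m)).mulVec (tensorVec X Y) = 0 :=
  tensor_mem_ker_P_general d n m T hbraid X hX Y

end Wick
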